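/- arXiv:2106.04444 — 5 statements merged into one kernel-verified Lean document; each statement's English description precedes it below -/
import Mathlib

section
/- Let G be a group acting on a set X, let σ : G → G be a group involution, and let H ≤ G be a subgroup. Then the homogeneous space X = G/H admits a map μ : G/H → G/H satisfying μ(g · kH) = σ(g) · μ(kH) for all g, k ∈ G and μ ∘ μ = id, if and only if there exists g₀ ∈ G such that σ(H) = g₀ H g₀⁻¹ and σ(g₀)g₀ ∈ H. Moreover, in that case one such map is given by μ(kH) = σ(k)g₀H. -/
private lemma stmt2_aux {G : Type*} [Group G] (H : Subgroup G) (σ : G →* G)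
    (hσ : ∀ g : G, σ (σ g) = g) (g₀ : G)
    (h1 : H.map σ = H.map (MulAut.conj g₀).toMonoidHom) (h2 : σ g₀ * g₀ ∈ H) :
    ∃ μ : G ⧸ H → G ⧸ H,
      (∀ (g : G) (x : G ⧸ H), μ (g • x) = σ g • μ x) ∧ (∀ x, μ (μ x) = x) ∧
      ∀ k : G, μ (QuotientGroup.mk k) = QuotientGroup.mk (σ k * g₀) := by
  have key : ∀ h ∈ H, g₀⁻¹ * σ h * g₀ ∈ H := by
    intro h hh
    have : σ h ∈ H.map (MulAut.conj g₀).toMonoidHom := by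
      rw [← h1]; exact ⟨h, hh, rfl⟩
    obtain ⟨h', hh', he⟩ := this
    simp only [MulEquiv.coe_toMonoidHom, MulAut.conj_apply] at he
    have : g₀⁻¹ * σ h * g₀ = h' := by rw [← he]; group
    rwa [this]
  have wd : ∀ a b : G, QuotientGroup.leftRel H a b →
      QuotientGroup.leftRel H (σ a * g₀) (σ b * g₀) := by
    intro a b hab
    rw [QuotientGroup.leftRel_apply] at hab ⊢
    have : (σ a * g₀)⁻¹ * (σ b * g₀) = g₀⁻¹ * σ (a⁻¹ * b) * g₀ := by
      simp only [map_mul, map_inv]; group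
    rw [this]; exact key _ hab
  set μ : G ⧸ H → G ⧸ H := Quotient.map' (fun k => σ k * g₀) wd with hμ
  have hmk : ∀ k : G, μ (QuotientGroup.mk k) = QuotientGroup.mk (σ k * g₀) :=
    fun k => rfl
  refine ⟨μ, ?_, ?_, hmk⟩
  · intro g x
    induction x using QuotientGroup.induction_on with
    | H k =>
      have e1 : g • (QuotientGroup.mk k : G ⧸ H) = QuotientGroup.mk (g * k) := by
        simp [MulAction.Quotient.smul_mk]
      have e2 : σ g • (QuotientGroup.mk (σ k * g₀) : G ⧸ H) =
          QuotientGroup.mk (σ g * (σ k * g₀)) := by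
        simp [MulAction.Quotient.smul_mk]
      rw [e1, hmk, hmk, e2, map_mul, mul_assoc]
  · intro x
    induction x using QuotientGroup.induction_on with
    | H k =>
      rw [hmk, hmk]
      have : σ (σ k * g₀) * g₀ = k * (σ g₀ * g₀) := by
        rw [map_mul, hσ, mul_assoc]
      rw [this, QuotientGroup.mk_mul_of_mem _ h2]

/-- Set-theoretic content of Lemma 2.4: for a group `G` acting on `G/H` by left
translation and a group involution `σ` of `G`, the homogeneous space `G/H`
admits a `σ`-equivariant involution `μ` iff there exists `g₀ ∈ G` with
`σ(H) = g₀ H g₀⁻¹` and `σ(g₀) g₀ ∈ H`; moreover in that case one such map is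
`μ(kH) = σ(k) g₀ H`. -/
theorem stmt2 {G : Type*} [Group G] (H : Subgroup G) (σ : G →* G)
    (hσ : ∀ g : G, σ (σ g) = g) :
    ((∃ μ : G ⧸ H → G ⧸ H,
        (∀ (g : G) (x : G ⧸ H), μ (g • x) = σ g • μ x) ∧ ∀ x, μ (μ x) = x) ↔
      ∃ g₀ : G, H.map σ = H.map (MulAut.conj g₀).toMonoidHom ∧ σ g₀ * g₀ ∈ H) ∧
    (∀ g₀ : G, H.map σ = H.map (MulAut.conj g₀).toMonoidHom → σ g₀ * g₀ ∈ H →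
      ∃ μ : G ⧸ H → G ⧸ H,
        (∀ (g : G) (x : G ⧸ H), μ (g • x) = σ g • μ x) ∧ (∀ x, μ (μ x) = x) ∧
        ∀ k : G, μ (QuotientGroup.mk k) = QuotientGroup.mk (σ k * g₀)) := by
  constructor
  · constructor
    · rintro ⟨μ, hequiv, hinv⟩
      obtain ⟨g₀, hg₀⟩ := QuotientGroup.mk_surjective (μ (QuotientGroup.mk (1 : G)))
      have hμk : ∀ k : G, μ (QuotientGroup.mk k) = QuotientGroup.mk (σ k * g₀) := by
        intro k
        have : (QuotientGroup.mk k : G ⧸ H) = k • QuotientGroup.mk (1 : G) := by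
          simp [MulAction.Quotient.smul_mk]
        rw [this, hequiv, ← hg₀]
        simp [MulAction.Quotient.smul_mk]
      have hkey : ∀ h ∈ H, g₀⁻¹ * σ h * g₀ ∈ H := by
        intro h hh
        have h1 : (QuotientGroup.mk h : G ⧸ H) = QuotientGroup.mk (1 : G) :=
          (QuotientGroup.eq).mpr (by simpa using H.inv_mem hh)
        have := congrArg μ h1
        rw [hμk, hμk] at this
        have h3 := (QuotientGroup.eq).mp this
        have : (σ h * g₀)⁻¹ * (σ 1 * g₀) = g₀⁻¹ * (σ h)⁻¹ * g₀ := by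
          simp only [map_one, one_mul]; group
        rw [this] at h3
        have := H.inv_mem h3
        simpa [mul_assoc] using this
      have hg2 : σ g₀ * g₀ ∈ H := by
        have := hinv (QuotientGroup.mk (1 : G))
        rw [hμk, map_one, one_mul, hμk] at this
        have h3 := (QuotientGroup.eq).mp this
        have he : (σ g₀ * g₀)⁻¹ * 1 = (σ g₀ * g₀)⁻¹ := mul_one _
        rw [he] at h3
        simpa using H.inv_mem h3
      refine ⟨g₀, ?_, hg2⟩
      ext x
      simp only [Subgroup.mem_map, MulEquiv.coe_toMonoidHom, MulAut.conj_apply]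
      constructor
      · rintro ⟨h, hh, rfl⟩
        refine ⟨g₀⁻¹ * σ h * g₀, hkey h hh, ?_⟩
        group
      · rintro ⟨h, hh, rfl⟩
        refine ⟨σ (g₀ * h * g₀⁻¹), ?_, hσ _⟩
        have e1 : σ (g₀ * h * g₀⁻¹) =
            (σ g₀ * g₀) * (g₀⁻¹ * σ h * g₀) * (σ g₀ * g₀)⁻¹ := by
          simp only [map_mul, map_inv]; group
        rw [e1]
        exact H.mul_mem (H.mul_mem hg2 (hkey h hh)) (H.inv_mem hg2)
    · rintro ⟨g₀, h1, h2⟩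
      obtain ⟨μ, ha, hb, _⟩ := stmt2_aux H σ hσ g₀ h1 h2
      exact ⟨μ, ha, hb⟩
  · intro g₀ h1 h2
    exact stmt2_aux H σ hσ g₀ h1 h2
end

section
/- Let G = SL₃(ℂ) with σ(g) = conj(g) (entrywise complex conjugation), let e be the nilpotent matrix with e₁₂ = e₂₃ = 1 and all other entries 0, and let H = Stab_G(e) under the adjoint (conjugation) action. Then the element g₀ = I + i·E₁₂ (identity matrix plus i in position (1,2)) satisfies σ(H) = g₀ H g₀⁻¹ and σ(g₀)g₀ ∈ H. -/
open Matrix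

private lemma aux_comm (g gi hm e k : Matrix (Fin 3) (Fin 3) ℂ)
    (hgi : g * gi = 1) (hk : gi * e * g = k) (hck : hm * k = k * hm) :
    (g * hm * gi) * e = e * (g * hm * gi) := by
  have h1 : gi * e = k * gi := by rw [← hk, mul_assoc, hgi, mul_one]
  have h2 : g * k = e * g := by rw [← hk, ← mul_assoc, ← mul_assoc, hgi, one_mul]
  calc (g * hm * gi) * e = g * (hm * (gi * e)) := by simp only [mul_assoc]
    _ = g * (hm * (k * gi)) := by rw [h1]
    _ = g * ((hm * k) * gi) := by rw [mul_assoc]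
    _ = g * ((k * hm) * gi) := by rw [hck]
    _ = (g * k) * (hm * gi) := by simp only [mul_assoc]
    _ = (e * g) * (hm * gi) := by rw [h2]
    _ = e * (g * hm * gi) := by simp only [mul_assoc]

/-- In `G = SL₃(ℂ)` with `σ(g) = conj(g)` (entrywise complex conjugation), let
`H` be the stabilizer of `e = E₁₂ + E₂₃` for the adjoint action. Then
`g₀ = I + i·E₁₂` satisfies `σ(H) = g₀ H g₀⁻¹` and `σ(g₀) g₀ ∈ H`. -/
theorem stmt3 :
    let e : Matrix (Fin 3) (Fin 3) ℂ := !![0, 1, 0; 0, 0, 1; 0, 0, 0]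
    let σ : Matrix.SpecialLinearGroup (Fin 3) ℂ →* Matrix.SpecialLinearGroup (Fin 3) ℂ :=
      Matrix.SpecialLinearGroup.map (starRingEnd ℂ)
    let H : Set (Matrix.SpecialLinearGroup (Fin 3) ℂ) :=
      {g | (g : Matrix (Fin 3) (Fin 3) ℂ) * e *
        ((g⁻¹ : Matrix.SpecialLinearGroup (Fin 3) ℂ) : Matrix (Fin 3) (Fin 3) ℂ) = e}
    ∀ g₀ : Matrix.SpecialLinearGroup (Fin 3) ℂ,
      (g₀ : Matrix (Fin 3) (Fin 3) ℂ) = !![1, Complex.I, 0; 0, 1, 0; 0, 0, 1] →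
      σ '' H = (fun h => g₀ * h * g₀⁻¹) '' H ∧ σ g₀ * g₀ ∈ H := by
  intro e σ H g₀ hg₀
  set m1 : Matrix (Fin 3) (Fin 3) ℂ := !![1, -Complex.I, 0; 0, 1, 0; 0, 0, 1] with hm1
  have hdet : m1.det = 1 := by
    simp [hm1, Matrix.det_fin_three]
  set G1 : Matrix.SpecialLinearGroup (Fin 3) ℂ := ⟨m1, hdet⟩ with hG1
  have hig : m1 * (g₀ : Matrix (Fin 3) (Fin 3) ℂ) = 1 := by
    rw [hg₀, hm1]
    ext i j
    fin_cases i <;> fin_cases j <;>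
      simp [Matrix.mul_apply, Fin.sum_univ_three, Matrix.one_apply, Matrix.vecHead, Matrix.vecTail]
  have hgi : (g₀ : Matrix (Fin 3) (Fin 3) ℂ) * m1 = 1 := by
    rw [hg₀, hm1]
    ext i j
    fin_cases i <;> fin_cases j <;>
      simp [Matrix.mul_apply, Fin.sum_univ_three, Matrix.one_apply, Matrix.vecHead, Matrix.vecTail]
  have hmul1 : g₀ * G1 = 1 := by
    apply Subtype.ext
    rw [Matrix.SpecialLinearGroup.coe_mul, Matrix.SpecialLinearGroup.coe_one]
    exact hgi
  have hinv : g₀⁻¹ = G1 := inv_eq_of_mul_eq_one_right hmul1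
  -- membership criterion
  have memH : ∀ g : Matrix.SpecialLinearGroup (Fin 3) ℂ,
      g ∈ H ↔ (g : Matrix (Fin 3) (Fin 3) ℂ) * e = e * g := by
    intro g
    have hgg : ((g⁻¹ : Matrix.SpecialLinearGroup (Fin 3) ℂ) : Matrix (Fin 3) (Fin 3) ℂ)
        * g = 1 := by
      rw [← Matrix.SpecialLinearGroup.coe_mul, inv_mul_cancel,
        Matrix.SpecialLinearGroup.coe_one]
    have hgg' : (g : Matrix (Fin 3) (Fin 3) ℂ)
        * ((g⁻¹ : Matrix.SpecialLinearGroup (Fin 3) ℂ) : Matrix (Fin 3) (Fin 3) ℂ) = 1 := by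
      rw [← Matrix.SpecialLinearGroup.coe_mul, mul_inv_cancel,
        Matrix.SpecialLinearGroup.coe_one]
    constructor
    · intro hg
      have h := congrArg (fun x => x * (g : Matrix (Fin 3) (Fin 3) ℂ)) hg
      simpa only [mul_assoc, hgg, mul_one] using h
    · intro hcomm
      show (g : Matrix (Fin 3) (Fin 3) ℂ) * e * _ = e
      rw [hcomm, mul_assoc, hgg', mul_one]
  have heconj : e.map (starRingEnd ℂ) = e := by
    ext i j
    fin_cases i <;> fin_cases j <;> simp [e, Matrix.map_apply, Matrix.vecHead, Matrix.vecTail]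
  have σcoe : ∀ g : Matrix.SpecialLinearGroup (Fin 3) ℂ,
      ((σ g : Matrix.SpecialLinearGroup (Fin 3) ℂ) : Matrix (Fin 3) (Fin 3) ℂ)
        = (g : Matrix (Fin 3) (Fin 3) ℂ).map (starRingEnd ℂ) := by
    intro g
    rfl
  have σH : ∀ g, g ∈ H → σ g ∈ H := by
    intro g hg
    rw [memH] at hg ⊢
    rw [σcoe]
    calc (g : Matrix (Fin 3) (Fin 3) ℂ).map (starRingEnd ℂ) * e
        = (g : Matrix (Fin 3) (Fin 3) ℂ).map (starRingEnd ℂ) * e.map (starRingEnd ℂ) := by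
          rw [heconj]
      _ = ((g : Matrix (Fin 3) (Fin 3) ℂ) * e).map (starRingEnd ℂ) := by
          rw [Matrix.map_mul]
      _ = (e * (g : Matrix (Fin 3) (Fin 3) ℂ)).map (starRingEnd ℂ) := by rw [hg]
      _ = e.map (starRingEnd ℂ) * (g : Matrix (Fin 3) (Fin 3) ℂ).map (starRingEnd ℂ) := by
          rw [Matrix.map_mul]
      _ = e * (g : Matrix (Fin 3) (Fin 3) ℂ).map (starRingEnd ℂ) := by rw [heconj]
  have σσ : ∀ g : Matrix.SpecialLinearGroup (Fin 3) ℂ, σ (σ g) = g := by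
    intro g
    apply Subtype.ext
    rw [σcoe, σcoe]
    ext i j
    simp [Matrix.map_apply]
  -- commuting lemmas
  have commk : ∀ (hm : Matrix (Fin 3) (Fin 3) ℂ) (c : ℂ), hm * e = e * hm →
      hm * (e + c • (e * e)) = (e + c • (e * e)) * hm := by
    intro hm c hcomm
    have hce2 : hm * (e * e) = (e * e) * hm := by
      rw [← mul_assoc, hcomm, mul_assoc, hcomm, ← mul_assoc]
    rw [mul_add, add_mul, hcomm, mul_smul_comm, smul_mul_assoc, hce2]
  -- explicit conjugation computations
  have hkneg : m1 * e * (g₀ : Matrix (Fin 3) (Fin 3) ℂ) = e + (-Complex.I) • (e * e) := by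
    rw [hg₀, hm1]
    ext i j
    fin_cases i <;> fin_cases j <;>
      simp [e, Matrix.mul_apply, Fin.sum_univ_three, Matrix.vecHead, Matrix.vecTail]
  have hkpos : (g₀ : Matrix (Fin 3) (Fin 3) ℂ) * e * m1 = e + Complex.I • (e * e) := by
    rw [hg₀, hm1]
    ext i j
    fin_cases i <;> fin_cases j <;>
      simp [e, Matrix.mul_apply, Fin.sum_univ_three, Matrix.vecHead, Matrix.vecTail]
  -- the conjugation image equals H
  have hHconj : (fun h => g₀ * h * g₀⁻¹) '' H = H := by
    ext g
    constructor
    · rintro ⟨h, hh, rfl⟩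
      rw [memH] at hh ⊢
      rw [hinv]
      show ((g₀ * h * G1 : Matrix.SpecialLinearGroup (Fin 3) ℂ) :
        Matrix (Fin 3) (Fin 3) ℂ) * e = _
      rw [Matrix.SpecialLinearGroup.coe_mul, Matrix.SpecialLinearGroup.coe_mul]
      exact aux_comm _ _ _ _ _ hgi hkneg (commk _ _ hh)
    · intro hg
      refine ⟨g₀⁻¹ * g * g₀, ?_, ?_⟩
      · rw [memH] at hg ⊢
        rw [hinv]
        rw [Matrix.SpecialLinearGroup.coe_mul, Matrix.SpecialLinearGroup.coe_mul]
        exact aux_comm _ _ _ _ _ hig hkpos (commk _ _ hg)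
      · group
  have hσH : σ '' H = H := by
    ext g
    constructor
    · rintro ⟨h, hh, rfl⟩
      exact σH h hh
    · intro hg
      exact ⟨σ g, σH g hg, σσ g⟩
  refine ⟨hσH.trans hHconj.symm, ?_⟩
  have hσg₀ : σ g₀ * g₀ = 1 := by
    apply Subtype.ext
    rw [Matrix.SpecialLinearGroup.coe_mul, Matrix.SpecialLinearGroup.coe_one, σcoe, hg₀]
    have : (!![1, Complex.I, 0; 0, 1, 0; 0, 0, 1] :
        Matrix (Fin 3) (Fin 3) ℂ).map (starRingEnd ℂ) = m1 := by
      ext i j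
      fin_cases i <;> fin_cases j <;> simp [hm1, Matrix.map_apply, Matrix.vecHead, Matrix.vecTail]
    rw [this, ← hg₀]
    exact hig
  rw [hσg₀, memH]
  simp
end

section
/- There is no SL₃(ℂ)-equivariant polynomial (regular) automorphism Φ of sl₃(ℂ) whose restriction to the regular nilpotent orbit sends g · e to g · e', where e = E₁₂ + E₂₃ and e' = E₁₂ − i·E₁₃ + E₂₃. More precisely, there is no G-equivariant morphism Φ : sl₃(ℂ) → sl₃(ℂ) (G = SL₃(ℂ) acting by conjugation) that is an automorphism of varieties and satisfies Φ(e) = e'. -/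
open Matrix

/-- A map on `3×3` complex matrices is a polynomial (regular) map if each entry
of the output is given by a polynomial in the entries of the input. -/
def IsPolynomialMatrixMap
    (Φ : Matrix (Fin 3) (Fin 3) ℂ → Matrix (Fin 3) (Fin 3) ℂ) : Prop :=
  ∃ P : Fin 3 → Fin 3 → MvPolynomial (Fin 3 × Fin 3) ℂ,
    ∀ (X : Matrix (Fin 3) (Fin 3) ℂ) (i j : Fin 3),
      Φ X i j = MvPolynomial.eval (fun p => X p.1 p.2) (P i j)

/-!
Suppose `Φ` is such an automorphism; its inverse `Ψ` is equivariant as well. Let `ω` be a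
primitive cube root of unity and, for `s ≠ 0`, let `X_s` be the companion matrix of `T³ - s³`, with
`X_0 = e`. A Vandermonde matrix conjugates `X_s` to `D_s = diag(s, ωs, ω²s)`. Equivariance makes
`Φ(D_s)` diagonal, with distinct entries: if two of them agreed, `Φ(D_s)`, and hence
`D_s = Ψ(Φ(D_s))`, would commute with a transposition. These entries are `f_s(ωᵏ s)`, where
`f_s(λ) = a(s) + b(s) λ + c(s) λ²` is read off the first row of `Φ(X_s)`, and `a, b, c` are
polynomials. So the polynomials `f_s(s) - f_s(ωᵏ s)`, `k = 1, 2`, have no zero on `ℂˣ` and are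
monomials. As `b(0) = Φ(e)₁₂ ≠ 0` they are multiples of `s`, and comparing the coefficients of
`s²` forces `c(0) = Φ(e)₁₃ = 0`.
-/

open Polynomial

section Matrices

variable {n R : Type*} [Fintype n] [DecidableEq n] [CommRing R]

lemma Matrix.SpecialLinearGroup.coe_mul_coe_inv (g : SpecialLinearGroup n R) :
    (g : Matrix n n R) * ((g⁻¹ : SpecialLinearGroup n R) : Matrix n n R) = 1 :=
  congrArg Subtype.val (mul_inv_cancel g)

lemma Matrix.SpecialLinearGroup.coe_inv_mul_coe (g : SpecialLinearGroup n R) :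
    ((g⁻¹ : SpecialLinearGroup n R) : Matrix n n R) * (g : Matrix n n R) = 1 :=
  congrArg Subtype.val (inv_mul_cancel g)

lemma Matrix.isDiag_of_commute_diagonal [NoZeroDivisors R] {d : n → R} (hd : Function.Injective d)
    {M : Matrix n n R} (h : Commute (diagonal d) M) : M.IsDiag := by
  intro i j hij
  have hij' := congrFun₂ h.eq i j
  simp only [diagonal_mul, mul_diagonal] at hij'
  have : (d i - d j) * M i j = 0 := by linear_combination hij'
  exact (mul_eq_zero.mp this).resolve_left (sub_ne_zero.mpr (hd.ne hij))

lemma Matrix.commute_swap_diagonal {d : n → R} {i j : n} (h : d i = d j) :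
    Commute (swap R i j) (diagonal d) := by
  have hd : ∀ a, d (Equiv.swap i j a) = d a := fun a => by
    rcases eq_or_ne a i with rfl | hai
    · simp [h]
    rcases eq_or_ne a j with rfl | haj
    · simp [h]
    · rw [Equiv.swap_apply_of_ne_of_ne hai haj]
  ext a b
  simp only [swap, PEquiv.toMatrix_toPEquiv_mul, PEquiv.mul_toMatrix_toPEquiv, submatrix_apply,
    diagonal_apply, id, Equiv.symm_swap, Equiv.swap_apply_eq_iff, hd]

lemma Matrix.eq_of_commute_swap_diagonal {d : n → R} {i j : n}
    (h : Commute (swap R i j) (diagonal d)) : d i = d j := by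
  have hij := congrFun₂ h.eq i j
  rw [swap_mul_apply_left, mul_swap_apply_right, diagonal_apply_eq, diagonal_apply_eq] at hij
  exact hij.symm

end Matrices

section Equivariance

variable {n K : Type*} [Fintype n] [DecidableEq n] [Field K]

def IsSLConjEquivariant (F : Matrix n n K → Matrix n n K) : Prop :=
  ∀ (g : SpecialLinearGroup n K) (X : Matrix n n K), X.trace = 0 →
    F (g * X * ((g⁻¹ : SpecialLinearGroup n K) : Matrix n n K)) =
      g * F X * ((g⁻¹ : SpecialLinearGroup n K) : Matrix n n K)

lemma exists_ne_zero_pow_card_eq_det [IsAlgClosed K] {T : Matrix n n K} (hT : IsUnit T.det) :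
    ∃ c : K, c ≠ 0 ∧ c ^ Fintype.card n = T.det := by
  rcases (Fintype.card n).eq_zero_or_pos with h | h
  · have : IsEmpty n := Fintype.card_eq_zero_iff.mp h
    exact ⟨1, one_ne_zero, by simp⟩
  · obtain ⟨c, hc⟩ := IsAlgClosed.exists_pow_nat_eq T.det h
    refine ⟨c, ?_, hc⟩
    rintro rfl
    exact hT.ne_zero (by rw [← hc, zero_pow h.ne'])

namespace IsSLConjEquivariant

variable {F G : Matrix n n K → Matrix n n K}

/-- Over an algebraically closed field every invertible `T` is a scalar multiple of an element
of `SL_n`, and scalars drop out of a conjugation. -/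
lemma mul_eq_mul [IsAlgClosed K] (hF : IsSLConjEquivariant F) {T A B : Matrix n n K}
    (hT : IsUnit T.det) (hA : A.trace = 0) (h : T * A = B * T) : T * F A = F B * T := by
  obtain ⟨c, hc0, hc⟩ := exists_ne_zero_pow_card_eq_det hT
  obtain ⟨g, hg⟩ : ∃ g : SpecialLinearGroup n K, (g : Matrix n n K) = c⁻¹ • T :=
    ⟨⟨c⁻¹ • T, by rw [det_smul, ← hc, inv_pow, inv_mul_cancel₀ (pow_ne_zero _ hc0)]⟩, rfl⟩
  have hgA : (g : Matrix n n K) * A = B * g := by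
    rw [hg, smul_mul, h, Matrix.mul_smul]
  have hgF : (g : Matrix n n K) * F A = F B * g := by
    have hconj := hF g A hA
    rw [hgA, mul_assoc, SpecialLinearGroup.coe_mul_coe_inv, mul_one] at hconj
    rw [hconj, mul_assoc, SpecialLinearGroup.coe_inv_mul_coe, mul_one]
  simpa [hg, smul_mul, Matrix.mul_smul, hc0] using hgF

lemma commute [IsAlgClosed K] (hF : IsSLConjEquivariant F) {T A : Matrix n n K}
    (hT : IsUnit T.det) (hA : A.trace = 0) (h : Commute T A) : Commute T (F A) :=
  hF.mul_eq_mul hT hA h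

lemma of_inverse (hF : IsSLConjEquivariant F)
    (hG : ∀ X : Matrix n n K, X.trace = 0 → (G X).trace = 0)
    (hGF : ∀ X : Matrix n n K, X.trace = 0 → G (F X) = X)
    (hFG : ∀ X : Matrix n n K, X.trace = 0 → F (G X) = X) :
    IsSLConjEquivariant G := by
  intro g X hX
  have htr : ((g : Matrix n n K) * G X * ((g⁻¹ : SpecialLinearGroup n K) : Matrix n n K)).trace
      = 0 := by
    rw [trace_mul_comm, ← mul_assoc, SpecialLinearGroup.coe_inv_mul_coe, one_mul, hG X hX]
  rw [← hGF _ htr, hF g _ (hG X hX), hFG X hX]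

end IsSLConjEquivariant

end Equivariance

lemma Polynomial.coeff_eq_zero_of_eval_ne_zero {K : Type*} [Field K] [IsAlgClosed K] {p : K[X]}
    (hp : ∀ s : K, s ≠ 0 → p.eval s ≠ 0) {i j : ℕ} (hi : p.coeff i ≠ 0) (hji : j ≠ i) :
    p.coeff j = 0 := by
  have hp0 : p ≠ 0 := by rintro rfl; simp at hi
  have hroots : p.roots = Multiset.replicate p.natDegree 0 := by
    refine Multiset.eq_replicate.mpr ⟨IsAlgClosed.card_roots_eq_natDegree, fun a ha => ?_⟩
    by_contra ha0
    exact hp a ha0 ((mem_roots hp0).mp ha)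
  have hmono : C p.leadingCoeff * X ^ p.natDegree = p := by
    simpa [hroots] using C_leadingCoeff_mul_prod_multiset_X_sub_C
      (IsAlgClosed.card_roots_eq_natDegree (p := p))
  rw [← hmono, coeff_C_mul_X_pow] at hi ⊢
  rw [if_neg]
  rintro rfl
  exact hji (by_contra fun h => hi (if_neg (Ne.symm h)))

section DiagonalOrbit

variable {n K : Type*} [Fintype n] [DecidableEq n] [Field K] [IsAlgClosed K]
  {F G : Matrix n n K → Matrix n n K}

lemma IsSLConjEquivariant.isDiag_apply_diagonal [CharZero K] (hF : IsSLConjEquivariant F)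
    {v : n → K} (hv : (diagonal v).trace = 0) : (F (diagonal v)).IsDiag := by
  let t : n → K := fun i => (Fintype.equivFin n i : ℕ) + 1
  have ht : Function.Injective t := fun a b hab => by
    simpa [t, Fin.val_inj] using hab
  have hdet : IsUnit (diagonal t).det := by
    rw [det_diagonal]
    exact (Finset.prod_ne_zero_iff.mpr fun i _ => Nat.cast_add_one_ne_zero _).isUnit
  exact isDiag_of_commute_diagonal ht (hF.commute hdet hv (commute_diagonal t v))

lemma IsSLConjEquivariant.injective_diag_of_apply_eq_diagonal (hG : IsSLConjEquivariant G)
    {v : n → K} (hv : Function.Injective v) {M : Matrix n n K} (hM : M.IsDiag)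
    (htr : M.trace = 0) (hGM : G M = diagonal v) : Function.Injective M.diag := by
  intro i j hij
  have hswap : Commute (swap K i j) M := by
    rw [← hM.diagonal_diag]
    exact commute_swap_diagonal hij
  have := hG.commute (isUnit_det_of_left_inverse (swap_mul_self i j)) htr hswap
  rw [hGM] at this
  exact hv (eq_of_commute_swap_diagonal this)

end DiagonalOrbit

lemma IsPolynomialMatrixMap.exists_eval_eq
    {Φ : Matrix (Fin 3) (Fin 3) ℂ → Matrix (Fin 3) (Fin 3) ℂ} (hΦ : IsPolynomialMatrixMap Φ)
    (c : Matrix (Fin 3) (Fin 3) ℂ[X]) (i j : Fin 3) :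
    ∃ p : ℂ[X], ∀ s : ℂ, Φ (c.map (eval s)) i j = p.eval s := by
  obtain ⟨P, hP⟩ := hΦ
  refine ⟨MvPolynomial.aeval (fun q => c q.1 q.2) (P i j), fun s => ?_⟩
  rw [hP]
  induction P i j using MvPolynomial.induction_on <;> simp_all

lemma Matrix.sum_mul_pow_eq_of_mul_vandermonde_transpose {R : Type*} [CommRing R] {m : ℕ}
    {v d : Fin (m + 1) → R} {M : Matrix (Fin (m + 1)) (Fin (m + 1)) R}
    (h : M * (vandermonde v)ᵀ = (vandermonde v)ᵀ * diagonal d) (k : Fin (m + 1)) :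
    ∑ j, M 0 j * v k ^ (j : ℕ) = d k := by
  have h0k := congrFun₂ h 0 k
  rw [mul_diagonal] at h0k
  simpa [mul_apply, vandermonde_apply] using h0k

def cubeCompanion {R : Type*} [Zero R] [One R] (c : R) : Matrix (Fin 3) (Fin 3) R :=
  !![0, 1, 0; 0, 0, 1; c, 0, 0]

lemma map_cubeCompanion {R S : Type*} [Semiring R] [Semiring S] (f : R →+* S) (c : R) :
    (cubeCompanion c).map f = cubeCompanion (f c) := by
  ext i j
  fin_cases i <;> fin_cases j <;> simp [cubeCompanion]

lemma Matrix.vandermonde_transpose_mul_diagonal {R : Type*} [CommRing R] {v : Fin 3 → R} {c : R}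
    (hv : ∀ i, v i ^ 3 = c) :
    (vandermonde v)ᵀ * diagonal v = cubeCompanion c * (vandermonde v)ᵀ := by
  ext i j
  rw [mul_diagonal]
  fin_cases i <;>
    simp [cubeCompanion, mul_apply, Fin.sum_univ_three, vandermonde_apply, ← hv j] <;> ring

section CubeRoots

variable {K : Type*} [Field K] {ω : K}

lemma IsSLConjEquivariant.injective_eval_firstRow_cubeCompanion [IsAlgClosed K] [CharZero K]
    {Φ Ψ : Matrix (Fin 3) (Fin 3) K → Matrix (Fin 3) (Fin 3) K}
    (hΦ : IsSLConjEquivariant Φ) (hΨ : IsSLConjEquivariant Ψ)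
    (hΦtr : ∀ X : Matrix (Fin 3) (Fin 3) K, X.trace = 0 → (Φ X).trace = 0)
    (hΨΦ : ∀ X : Matrix (Fin 3) (Fin 3) K, X.trace = 0 → Ψ (Φ X) = X)
    (hω : IsPrimitiveRoot ω 3) {s : K} (hs : s ≠ 0) :
    Function.Injective fun i : Fin 3 =>
      ∑ j, Φ (cubeCompanion (s ^ 3)) 0 j * (ω ^ (i : ℕ) * s) ^ (j : ℕ) := by
  set v : Fin 3 → K := fun i => ω ^ (i : ℕ) * s
  have hv : Function.Injective v := fun i j hij =>
    Fin.ext (hω.pow_inj i.isLt j.isLt (mul_right_cancel₀ hs hij))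
  have htr : (diagonal v).trace = 0 := by
    rw [trace_diagonal, ← Finset.sum_mul, Fin.sum_univ_eq_sum_range (ω ^ ·),
      hω.geom_sum_eq_zero (by norm_num), zero_mul]
  have hdiag := hΦ.isDiag_apply_diagonal htr
  have hV : IsUnit ((vandermonde v)ᵀ).det := by
    rw [det_transpose]
    exact (det_vandermonde_ne_zero_iff.mpr hv).isUnit
  have hconj := hΦ.mul_eq_mul hV htr (vandermonde_transpose_mul_diagonal (c := s ^ 3)
    fun i => by rw [mul_pow, ← pow_mul, mul_comm _ 3, pow_mul, hω.pow_eq_one, one_pow, one_mul])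
  rw [← hdiag.diagonal_diag] at hconj
  convert hΨ.injective_diag_of_apply_eq_diagonal hv hdiag (hΦtr _ htr) (hΨΦ _ htr)
  exact sum_mul_pow_eq_of_mul_vandermonde_transpose hconj.symm _

lemma one_sub_pow_mul_coeff_one_add_eq_zero [IsAlgClosed K] (hω : IsPrimitiveRoot ω 3)
    {p : Fin 3 → K[X]} (hp : (p 1).coeff 0 ≠ 0)
    (hinj : ∀ s : K, s ≠ 0 →
      Function.Injective fun i : Fin 3 => ∑ j, (p j).eval s * (ω ^ (i : ℕ) * s) ^ (j : ℕ))
    {k : Fin 3} (hk : k ≠ 0) :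
    (1 - ω ^ (k : ℕ)) * (p 1).coeff 1 + (1 - ω ^ (2 * (k : ℕ))) * (p 2).coeff 0 = 0 := by
  have hk1 : ω ^ (k : ℕ) ≠ 1 := hω.pow_ne_one_of_pos_of_lt (Fin.val_ne_zero_iff.mpr hk) k.isLt
  -- `q.eval s = f_s(s) - f_s(ωᵏ s)` in the notation of the header
  set q : K[X] := C (1 - ω ^ (k : ℕ)) * (X * p 1) + C (1 - ω ^ (2 * (k : ℕ))) * (X ^ 2 * p 2)
  have hq : ∀ s : K, s ≠ 0 → q.eval s ≠ 0 := by
    intro s hs hq0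
    refine hk (hinj s hs ?_).symm
    simp only [q, eval_add, eval_mul, eval_C, eval_X, eval_pow] at hq0
    simp only [Fin.sum_univ_three, Fin.val_zero, Fin.val_one, Fin.val_two, pow_zero, pow_one,
      one_mul, mul_one]
    linear_combination hq0
  have hq1 : q.coeff 1 = (1 - ω ^ (k : ℕ)) * (p 1).coeff 0 := by
    simp only [q, coeff_add, coeff_C_mul, coeff_X_mul, coeff_X_pow_mul']
    norm_num
  have hq2 : q.coeff 2 =
      (1 - ω ^ (k : ℕ)) * (p 1).coeff 1 + (1 - ω ^ (2 * (k : ℕ))) * (p 2).coeff 0 := by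
    simp only [q, coeff_add, coeff_C_mul, coeff_X_mul, coeff_X_pow_mul']
    norm_num
  rw [← hq2]
  refine coeff_eq_zero_of_eval_ne_zero hq ?_ (by norm_num : 2 ≠ 1)
  rw [hq1]
  exact mul_ne_zero (sub_ne_zero.mpr hk1.symm) hp

lemma coeff_zero_eq_zero_of_injective_eval [IsAlgClosed K] (hω : IsPrimitiveRoot ω 3)
    {p : Fin 3 → K[X]} (hp : (p 1).coeff 0 ≠ 0)
    (hinj : ∀ s : K, s ≠ 0 →
      Function.Injective fun i : Fin 3 => ∑ j, (p j).eval s * (ω ^ (i : ℕ) * s) ^ (j : ℕ)) :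
    (p 2).coeff 0 = 0 := by
  have h1 := one_sub_pow_mul_coeff_one_add_eq_zero hω hp hinj (k := 1) (by decide)
  have h2 := one_sub_pow_mul_coeff_one_add_eq_zero hω hp hinj (k := 2) (by decide)
  simp only [Fin.val_one, Fin.val_two, mul_one] at h1 h2
  have h : (1 - ω) ^ 2 * ω * (1 - ω ^ 2) * (p 2).coeff 0 = 0 := by
    linear_combination (1 - ω ^ 2) * h1 - (1 - ω) * h2
  have h1ω : 1 - ω ≠ 0 := sub_ne_zero.mpr (hω.ne_one (by norm_num)).symm
  have h2ω : 1 - ω ^ 2 ≠ 0 :=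
    sub_ne_zero.mpr (hω.pow_ne_one_of_pos_of_lt (by norm_num) (by norm_num)).symm
  exact (mul_eq_zero.mp h).resolve_left
    (mul_ne_zero (mul_ne_zero (pow_ne_zero 2 h1ω) (hω.ne_zero (by norm_num))) h2ω)

end CubeRoots

/-- There is no `SL₃(ℂ)`-equivariant automorphism of varieties `Φ` of `sl₃(ℂ)`
(with polynomial inverse `Ψ`) sending `e = E₁₂ + E₂₃` to
`e' = E₁₂ - i·E₁₃ + E₂₃`. -/
theorem stmt7 :
    ¬ ∃ Φ Ψ : Matrix (Fin 3) (Fin 3) ℂ → Matrix (Fin 3) (Fin 3) ℂ,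
      IsPolynomialMatrixMap Φ ∧ IsPolynomialMatrixMap Ψ ∧
      (∀ X : Matrix (Fin 3) (Fin 3) ℂ, Matrix.trace X = 0 →
        Matrix.trace (Φ X) = 0 ∧ Matrix.trace (Ψ X) = 0 ∧
        Ψ (Φ X) = X ∧ Φ (Ψ X) = X) ∧
      (∀ (g : Matrix.SpecialLinearGroup (Fin 3) ℂ) (X : Matrix (Fin 3) (Fin 3) ℂ),
        Matrix.trace X = 0 →
        Φ ((g : Matrix (Fin 3) (Fin 3) ℂ) * X *
            ((g⁻¹ : Matrix.SpecialLinearGroup (Fin 3) ℂ) : Matrix (Fin 3) (Fin 3) ℂ)) =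
          (g : Matrix (Fin 3) (Fin 3) ℂ) * Φ X *
            ((g⁻¹ : Matrix.SpecialLinearGroup (Fin 3) ℂ) : Matrix (Fin 3) (Fin 3) ℂ)) ∧
      Φ !![0, 1, 0; 0, 0, 1; 0, 0, 0] = !![0, 1, -Complex.I; 0, 0, 1; 0, 0, 0] := by
  rintro ⟨Φ, Ψ, hΦpoly, -, hinv, hΦ : IsSLConjEquivariant Φ, hΦe⟩
  obtain ⟨ω, hω⟩ : ∃ ω : ℂ, IsPrimitiveRoot ω 3 :=
    ⟨_, Complex.isPrimitiveRoot_exp 3 (by norm_num)⟩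
  have hΨ : IsSLConjEquivariant Ψ := hΦ.of_inverse (fun X hX => (hinv X hX).2.1)
    (fun X hX => (hinv X hX).2.2.1) (fun X hX => (hinv X hX).2.2.2)
  choose p hp using hΦpoly.exists_eval_eq (cubeCompanion (X ^ 3 : ℂ[X])) 0
  have hrow : ∀ s j, Φ (cubeCompanion (s ^ 3)) 0 j = (p j).eval s := fun s j => by
    have hmap : (cubeCompanion (X ^ 3 : ℂ[X])).map (eval s) = cubeCompanion (s ^ 3) := by
      have := map_cubeCompanion (evalRingHom s) (X ^ 3)
      rwa [coe_evalRingHom, eval_pow, eval_X] at this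
    rw [← hmap, hp]
  have hinj : ∀ s : ℂ, s ≠ 0 → Function.Injective fun i : Fin 3 =>
      ∑ j, (p j).eval s * (ω ^ (i : ℕ) * s) ^ (j : ℕ) := fun s hs => by
    simpa only [hrow] using hΦ.injective_eval_firstRow_cubeCompanion hΨ
      (fun X hX => (hinv X hX).1) (fun X hX => (hinv X hX).2.2.1) hω hs
  have he : ∀ j, (p j).coeff 0 = !![0, 1, -Complex.I; 0, 0, 1; 0, 0, 0] 0 j := fun j => by
    rw [coeff_zero_eq_eval_zero, ← hrow, ← hΦe]
    norm_num [cubeCompanion]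
  have h2 := coeff_zero_eq_zero_of_injective_eval hω (by simp [he]) hinj
  simp [he] at h2
end

section
/- Let f₁, f₂ : ℂ* → ℂ* be given by f_i(a) = ν_i a^{ε_i} with ν_i ∈ ℂ* and ε_i ∈ ℤ. Suppose the matrix-valued function a ↦ M(a), where M(a) has entries M(a)₁₁ = M(a)₂₂ = ν₁ a^{ε₁}, M(a)₃₃ = −2ν₁ a^{ε₁}, M(a)₁₂ = ν₂ a^{ε₂}, M(a)₂₃ = ν₁ a^{ε₁−1}, M(a)₁₃ = (1/3)(ν₂ a^{ε₂−1} − ν₁ a^{ε₁−2}), and all other entries 0, converges as a → 0 (a ∈ ℂ*) to the matrix with entries (1,2)-entry 1, (2,3)-entry 1, (1,3)-entry −i, and 0 elsewhere. Then a contradiction follows; i.e., no such ν₁, ν₂ ∈ ℂ*, ε₁, ε₂ ∈ ℤ exist. -/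
open Matrix Filter

lemma aux8 (ν c : ℂ) (ε : ℤ) (hν : ν ≠ 0) (hc : c ≠ 0)
    (h : Tendsto (fun a : ℂ => ν * a ^ ε) (nhdsWithin (0 : ℂ) {(0:ℂ)}ᶜ) (nhds c)) :
    ε = 0 ∧ ν = c := by
  have ha : Tendsto (fun a : ℂ => a) (nhdsWithin (0 : ℂ) {(0:ℂ)}ᶜ) (nhds 0) :=
    tendsto_id.mono_left nhdsWithin_le_nhds
  rcases lt_trichotomy ε 0 with hε | hε | hε
  · exfalso
    set n := (-ε).toNat with hn
    have hne : (n : ℤ) = -ε := Int.toNat_of_nonneg (by omega)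
    have hpow : Tendsto (fun a : ℂ => (ν * a ^ ε) * a ^ n) (nhdsWithin (0 : ℂ) {(0:ℂ)}ᶜ)
        (nhds (c * 0 ^ n)) := h.mul (ha.pow n)
    have hnz : n ≠ 0 := by omega
    rw [zero_pow hnz, mul_zero] at hpow
    have hconst : Tendsto (fun _ : ℂ => ν) (nhdsWithin (0 : ℂ) {(0:ℂ)}ᶜ) (nhds 0) := by
      refine hpow.congr' ?_
      filter_upwards [self_mem_nhdsWithin] with a haa
      have ha0 : a ≠ 0 := haa
      rw [mul_assoc, ← zpow_natCast a n, ← zpow_add₀ ha0, hne]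
      simp
    exact hν (tendsto_nhds_unique tendsto_const_nhds hconst)
  · subst hε
    simp only [zpow_zero, mul_one] at h
    exact ⟨rfl, tendsto_nhds_unique tendsto_const_nhds h⟩
  · exfalso
    set n := ε.toNat with hn
    have hne : (n : ℤ) = ε := Int.toNat_of_nonneg (by omega)
    have hnz : n ≠ 0 := by omega
    have hpow : Tendsto (fun a : ℂ => ν * a ^ ε) (nhdsWithin (0 : ℂ) {(0:ℂ)}ᶜ)
        (nhds (ν * 0 ^ n)) := by
      have := (tendsto_const_nhds (α := ℂ) (x := ν)
        (f := nhdsWithin (0:ℂ) {(0:ℂ)}ᶜ)).mul (ha.pow n)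
      refine this.congr fun a => ?_
      rw [← zpow_natCast a n, hne]
    rw [zero_pow hnz, mul_zero] at hpow
    exact hc (tendsto_nhds_unique h hpow)

/-- The key limit computation: there are no `ν₁, ν₂ ∈ ℂ*` and `ε₁, ε₂ ∈ ℤ` such
that the matrix
`[[ν₁ a^ε₁, ν₂ a^ε₂, (1/3)(ν₂ a^(ε₂-1) - ν₁ a^(ε₁-2))],
  [0, ν₁ a^ε₁, ν₁ a^(ε₁-1)], [0, 0, -2 ν₁ a^ε₁]]`
converges, as `a → 0` in `ℂ*`, to `[[0,1,-i],[0,0,1],[0,0,0]]`. -/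
theorem stmt8 :
    ¬ ∃ (ν₁ ν₂ : ℂ) (ε₁ ε₂ : ℤ), ν₁ ≠ 0 ∧ ν₂ ≠ 0 ∧
      Filter.Tendsto
        (fun a : ℂ =>
          (!![ν₁ * a ^ ε₁, ν₂ * a ^ ε₂,
                (1 / 3) * (ν₂ * a ^ (ε₂ - 1) - ν₁ * a ^ (ε₁ - 2));
              0, ν₁ * a ^ ε₁, ν₁ * a ^ (ε₁ - 1);
              0, 0, -2 * ν₁ * a ^ ε₁] : Matrix (Fin 3) (Fin 3) ℂ))
        (nhdsWithin (0 : ℂ) {(0 : ℂ)}ᶜ)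
        (nhds (!![0, 1, -Complex.I; 0, 0, 1; 0, 0, 0] : Matrix (Fin 3) (Fin 3) ℂ)) := by
  rintro ⟨ν₁, ν₂, ε₁, ε₂, hν₁, hν₂, h⟩
  have h12 := tendsto_pi_nhds.mp (tendsto_pi_nhds.mp h 0) 1
  have h23 := tendsto_pi_nhds.mp (tendsto_pi_nhds.mp h 1) 2
  have h13 := tendsto_pi_nhds.mp (tendsto_pi_nhds.mp h 0) 2
  simp only [Matrix.cons_val', Matrix.cons_val_zero, Matrix.cons_val_one, Matrix.head_cons,
    Matrix.empty_val', Matrix.cons_val_fin_one, Matrix.head_fin_const, Matrix.of_apply,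
    Matrix.cons_val_two, Matrix.tail_cons] at h12 h23 h13
  obtain ⟨he2, hv2⟩ := aux8 ν₂ 1 ε₂ hν₂ one_ne_zero h12
  obtain ⟨he1, hv1⟩ := aux8 ν₁ 1 (ε₁ - 1) hν₁ one_ne_zero h23
  subst hv1 hv2
  have hε₁ : ε₁ = 1 := by omega
  subst hε₁ he2
  norm_num at h13
end

section
/- The image X of the map f : ℂ² → ℂ⁴, (s,t) ↦ (s, st, t², t³), satisfies: a point (u,v,w,x) ∈ ℂ⁴ lies in X if and only if u²w = v², vw = ux, uw² = vx, and w³ = x². -/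
/-! Away from `u = 0` the preimage is forced to be `(u, v / u)`. On the line `u = 0` the first
equation forces `v = 0`, and what is left is the cusp `w³ = x²`, parametrized by `t = x / w`. -/

section CuspidalMap

variable (R : Type*) [CommRing R]

def cuspidalMap (p : R × R) : R × R × R × R :=
  (p.1, p.1 * p.2, p.2 ^ 2, p.2 ^ 3)

variable {R}

theorem cuspidalMap_equations (p : R × R) :
    let q := cuspidalMap R p
    q.1 ^ 2 * q.2.2.1 = q.2.1 ^ 2 ∧
      q.2.1 * q.2.2.1 = q.1 * q.2.2.2 ∧
      q.1 * q.2.2.1 ^ 2 = q.2.1 * q.2.2.2 ∧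
      q.2.2.1 ^ 3 = q.2.2.2 ^ 2 := by
  refine ⟨?_, ?_, ?_, ?_⟩ <;> simp only [cuspidalMap] <;> ring

end CuspidalMap

section Field

variable {K : Type*} [Field K]

theorem exists_sq_eq_and_pow_three_eq_of_pow_three_eq_sq {w x : K} (h : w ^ 3 = x ^ 2) :
    ∃ t : K, t ^ 2 = w ∧ t ^ 3 = x := by
  by_cases hw : w = 0
  · have hx : x = 0 := pow_eq_zero_iff two_ne_zero |>.mp (by rw [← h, hw]; ring)
    exact ⟨0, by simp [hw, hx]⟩
  · refine ⟨x / w, ?_, ?_⟩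
    · field_simp
      linear_combination -h
    · field_simp
      linear_combination -x * h

theorem mem_range_cuspidalMap_of_equations {u v w x : K} (h₁ : u ^ 2 * w = v ^ 2)
    (h₂ : v * w = u * x) (h₄ : w ^ 3 = x ^ 2) : (u, v, w, x) ∈ Set.range (cuspidalMap K) := by
  by_cases hu : u = 0
  · have hv : v = 0 := pow_eq_zero_iff two_ne_zero |>.mp (by rw [← h₁, hu]; ring)
    obtain ⟨t, ht₂, ht₃⟩ := exists_sq_eq_and_pow_three_eq_of_pow_three_eq_sq h₄
    exact ⟨(0, t), by simp [cuspidalMap, hu, hv, ht₂, ht₃]⟩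
  · refine ⟨(u, v / u), ?_⟩
    simp only [cuspidalMap, Prod.mk.injEq]
    refine ⟨trivial, by field_simp, ?_, ?_⟩
    · field_simp
      linear_combination -h₁
    · field_simp
      linear_combination (-v) * h₁ + u ^ 2 * h₂

theorem mem_range_cuspidalMap_iff (q : K × K × K × K) :
    q ∈ Set.range (cuspidalMap K) ↔
      q.1 ^ 2 * q.2.2.1 = q.2.1 ^ 2 ∧
      q.2.1 * q.2.2.1 = q.1 * q.2.2.2 ∧
      q.1 * q.2.2.1 ^ 2 = q.2.1 * q.2.2.2 ∧
      q.2.2.1 ^ 3 = q.2.2.2 ^ 2 := by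
  constructor
  · rintro ⟨p, rfl⟩
    exact cuspidalMap_equations p
  · obtain ⟨u, v, w, x⟩ := q
    rintro ⟨h₁, h₂, -, h₄⟩
    exact mem_range_cuspidalMap_of_equations h₁ h₂ h₄

end Field

/-- The image of `f : ℂ² → ℂ⁴, (s,t) ↦ (s, st, t², t³)` is exactly the common
zero locus of `u²w - v²`, `vw - ux`, `uw² - vx`, `w³ - x²`. -/
theorem stmt16 (q : ℂ × ℂ × ℂ × ℂ) :
    q ∈ Set.range (fun p : ℂ × ℂ => (p.1, p.1 * p.2, p.2 ^ 2, p.2 ^ 3)) ↔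
      q.1 ^ 2 * q.2.2.1 = q.2.1 ^ 2 ∧
      q.2.1 * q.2.2.1 = q.1 * q.2.2.2 ∧
      q.1 * q.2.2.1 ^ 2 = q.2.1 * q.2.2.2 ∧
      q.2.2.1 ^ 3 = q.2.2.2 ^ 2 :=
  mem_range_cuspidalMap_iff q
end
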